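/- For every integer m ≥ 1 and every integer k ≥ 1, the k-color Ramsey number of C_{2m+1} satisfies r_k(C_{2m+1}) ≥ m·2^k + 1. -/

import Mathlib

open SimpleGraph

/-- `H` is contained in `G` as a subgraph (there is an injective adjacency-preserving map). -/
def ContainsCopy {α β : Type*} (H : SimpleGraph α) (G : SimpleGraph β) : Prop :=
  ∃ f : α ↪ β, ∀ u v, H.Adj u v → G.Adj (f u) (f v)

/-- The `k`-edge-coloring `c` of the complete graph on `Fin N` contains a monochromatic copy of `H`. -/
def HasMonoCopy {α : Type*} (H : SimpleGraph α) {N k : ℕ}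
    (c : Sym2 (Fin N) → Fin k) : Prop :=
  ∃ i : Fin k, ∃ f : α ↪ Fin N, ∀ u v, H.Adj u v → c s(f u, f v) = i

/-- The multicolor Ramsey number `r_k(H)`: the least `N` such that every `k`-coloring of the
edges of `K_N` contains a monochromatic copy of `H`. -/
noncomputable def multiRamsey {α : Type*} (H : SimpleGraph α) (k : ℕ) : ℕ :=
  sInf {N | ∀ c : Sym2 (Fin N) → Fin k, HasMonoCopy H c}

/-- The graph on `Fin N` formed by the edges of color `i`. -/
def colorGraph {N k : ℕ} (c : Sym2 (Fin N) → Fin k) (i : Fin k) : SimpleGraph (Fin N) where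
  Adj u v := u ≠ v ∧ c s(u, v) = i
  symm := by
    constructor
    intro u v h
    exact ⟨h.1.symm, by rw [Sym2.eq_swap]; exact h.2⟩
  loopless := ⟨fun u h => h.1 rfl⟩

/-- The independence number of a graph. -/
noncomputable def indepNum {V : Type*} (G : SimpleGraph V) : ℕ :=
  sSup {n | ∃ s : Finset V, s.card = n ∧ ∀ u ∈ s, ∀ v ∈ s, ¬ G.Adj u v}

/-!
Bondy–Erdős construction. Split `m 2^k` vertices into `2^k` blocks of size `m` indexed by `k`-bit
strings and colour an edge by the highest bit in which the indices of its blocks differ (colour `0`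
also inside a block). Every colour `i ≠ 0` is bipartite, and colour `0` only joins vertices in the
same pair of blocks `{2j, 2j+1}`, so its components have at most `2m` vertices. Neither kind of
graph contains the odd, connected cycle `C_{2m+1}`. That `r_k(C_{2m+1})` is finite at all follows
from the greedy proof of Ramsey's theorem, which yields a monochromatic clique.
-/

namespace SimpleGraph

variable {V γ : Type*}

theorem Reachable.apply_eq_of_forall_adj {G : SimpleGraph V} {g : V → γ}
    (hg : ∀ u v, G.Adj u v → g u = g v) {u v : V} (h : G.Reachable u v) : g u = g v := by
  obtain ⟨p⟩ := h
  induction p with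
  | nil => rfl
  | cons hadj _ ih => exact (hg _ _ hadj).trans ih

theorem not_colorable_two_cycleGraph_of_odd {n : ℕ} (hn : 2 ≤ n) (hodd : Odd n) :
    ¬ (cycleGraph n).Colorable 2 := by
  rw [← chromaticNumber_le_iff_colorable, chromaticNumber_cycleGraph_of_odd n hn hodd]
  decide

end SimpleGraph

open SimpleGraph

section ContainsCopy

variable {α β γ : Type*} {H : SimpleGraph α} {G : SimpleGraph β}

theorem ContainsCopy.colorable {n : ℕ} (hHG : ContainsCopy H G) (hG : G.Colorable n) :
    H.Colorable n := by
  obtain ⟨f, hf⟩ := hHG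
  exact hG.of_hom ⟨f, hf _ _⟩

theorem ContainsCopy.card_le_of_preconnected [Fintype α] {n : ℕ} (hHG : ContainsCopy H G)
    (hH : H.Preconnected) (g : β → γ) (hg : ∀ u v, G.Adj u v → g u = g v) (r : β → Fin n)
    (hr : ∀ x y, g x = g y → r x = r y → x = y) : Fintype.card α ≤ n := by
  obtain ⟨f, hf⟩ := hHG
  have hconst : ∀ u v, g (f u) = g (f v) :=
    fun u v => (hH u v).apply_eq_of_forall_adj (g := g ∘ f) fun u v h => hg _ _ (hf u v h)
  simpa using Fintype.card_le_of_injective (r ∘ f) fun u v h =>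
    f.injective (hr _ _ (hconst u v) h)

end ContainsCopy

section HasMonoCopy

variable {α : Type*} {H : SimpleGraph α} {N k : ℕ}

theorem HasMonoCopy.exists_containsCopy_colorGraph {c : Sym2 (Fin N) → Fin k}
    (h : HasMonoCopy H c) : ∃ i, ContainsCopy H (colorGraph c i) := by
  obtain ⟨i, f, hf⟩ := h
  exact ⟨i, f, fun u v huv => ⟨f.injective.ne huv.ne, hf u v huv⟩⟩

theorem HasMonoCopy.of_map {n : ℕ} {c : Sym2 (Fin N) → Fin k} (e : Fin n ↪ Fin N)
    (h : HasMonoCopy H fun s => c (s.map e)) : HasMonoCopy H c := by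
  obtain ⟨i, f, hf⟩ := h
  exact ⟨i, f.trans e, hf⟩

/-- Without `hfin`, `multiRamsey H k` would be the junk value `sInf ∅ = 0`. -/
theorem le_multiRamsey_of_not_hasMonoCopy
    (hfin : ∃ N, ∀ c : Sym2 (Fin N) → Fin k, HasMonoCopy H c) {M : ℕ}
    (c : Sym2 (Fin M) → Fin k) (hc : ¬ HasMonoCopy H c) : M + 1 ≤ multiRamsey H k := by
  refine le_csInf hfin fun n hn => ?_
  by_contra! hnM
  exact hc (.of_map (Fin.castLEEmb (Nat.le_of_lt_succ hnM)) (hn _))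

end HasMonoCopy

section Greedy

variable {V κ : Type*} [Fintype κ] [Nonempty κ] [DecidableEq κ] [DecidableEq V]

/-- The greedy step of the Erdős–Szekeres proof of Ramsey's theorem. -/
theorem exists_seq_color_eq_of_lt (c : Sym2 V → κ) (t : ℕ) (S : Finset V)
    (hS : (Fintype.card κ + 1) ^ t ≤ S.card) :
    ∃ (v : Fin t → V) (col : Fin t → κ), Function.Injective v ∧ (∀ a, v a ∈ S) ∧
      ∀ a b, a < b → c s(v a, v b) = col a := by
  induction t generalizing S with
  | zero => exact ⟨Fin.elim0, Fin.elim0, fun a => a.elim0, fun a => a.elim0, fun a => a.elim0⟩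
  | succ t ih =>
    set K := Fintype.card κ
    obtain ⟨v₀, hv₀⟩ : S.Nonempty := Finset.card_pos.mp (lt_of_lt_of_le (by positivity) hS)
    have hcard : K * (K + 1) ^ t ≤ (S.erase v₀).card := by
      have hpos : 1 ≤ (K + 1) ^ t := Nat.one_le_pow _ _ (by omega)
      rw [pow_succ, mul_add, mul_one] at hS
      rw [Finset.card_erase_of_mem hv₀, mul_comm]
      omega
    obtain ⟨i, -, hi⟩ := Finset.exists_le_card_fiber_of_mul_le_card_of_maps_to
      (f := fun x => c s(v₀, x)) (fun _ _ => Finset.mem_univ _) Finset.univ_nonempty hcard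
    obtain ⟨v, col, hinj, hmem, hcol⟩ := ih _ hi
    have hmem' : ∀ a, v a ∈ S.erase v₀ ∧ c s(v₀, v a) = i := fun a =>
      Finset.mem_filter.mp (hmem a)
    refine ⟨Fin.cons v₀ v, Fin.cons i col, ?_, ?_, ?_⟩
    · exact Fin.cons_injective_iff.mpr
        ⟨fun ⟨a, ha⟩ => Finset.ne_of_mem_erase (hmem' a).1 ha, hinj⟩
    · exact Fin.cases hv₀ fun a => Finset.mem_of_mem_erase (hmem' a).1
    · intro a b hab
      cases b using Fin.cases with
      | zero => exact absurd hab (Fin.not_lt_zero a)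
      | succ b =>
        cases a using Fin.cases with
        | zero => simpa using (hmem' b).2
        | succ a => simpa using hcol a b (Fin.succ_lt_succ_iff.mp hab)

theorem exists_monochromatic_clique [Fintype V] (c : Sym2 V → κ) (s : ℕ)
    (hV : (Fintype.card κ + 1) ^ (Fintype.card κ * s + 1) ≤ Fintype.card V) :
    ∃ i, ∃ f : Fin s ↪ V, ∀ a b, a ≠ b → c s(f a, f b) = i := by
  obtain ⟨v, col, hinj, -, hcol⟩ := exists_seq_color_eq_of_lt c _ Finset.univ hV
  obtain ⟨i, hi⟩ := Fintype.exists_lt_card_fiber_of_mul_lt_card col (n := s) (by simp)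
  obtain ⟨B, hB, hBcard⟩ := Finset.exists_subset_card_eq hi.le
  let e := B.orderEmbOfFin hBcard
  have hcol_e : ∀ a, col (e a) = i := fun a =>
    (Finset.mem_filter.mp (hB (B.orderEmbOfFin_mem _ a))).2
  have hlt : ∀ a b, a < b → c s(v (e a), v (e b)) = i := fun a b hab =>
    (hcol _ _ (e.strictMono hab)).trans (hcol_e a)
  refine ⟨i, ⟨v ∘ e, hinj.comp e.injective⟩, fun a b hab => ?_⟩
  rcases hab.lt_or_gt with hab | hab
  · exact hlt a b hab
  · rw [Sym2.eq_swap]; exact hlt b a hab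

theorem exists_forall_hasMonoCopy {n k : ℕ} [NeZero k] (H : SimpleGraph (Fin n)) :
    ∃ N, ∀ c : Sym2 (Fin N) → Fin k, HasMonoCopy H c := by
  refine ⟨(k + 1) ^ (k * n + 1), fun c => ?_⟩
  obtain ⟨i, f, hf⟩ := exists_monochromatic_clique c n (by simp)
  exact ⟨i, f, fun u v huv => hf u v huv.ne⟩

end Greedy

namespace Nat

theorem log2_xor_lt {a b k : ℕ} (hk : k ≠ 0) (ha : a < 2 ^ k) (hb : b < 2 ^ k) :
    (a ^^^ b).log2 < k := by
  rcases eq_or_ne (a ^^^ b) 0 with h | h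
  · rw [h, Nat.log2_zero]; omega
  · exact (Nat.log2_lt h).mpr (Nat.xor_lt_two_pow ha hb)

theorem div_two_eq_of_log2_xor_eq_zero {a b : ℕ} (h : (a ^^^ b).log2 = 0) : a / 2 = b / 2 := by
  have hlt : a ^^^ b < 2 := by
    rcases eq_or_ne (a ^^^ b) 0 with h0 | h0
    · omega
    · simpa using (Nat.log2_lt h0 (k := 1)).mp (by omega)
  have hxor : a / 2 ^^^ b / 2 = 0 := by rw [← Nat.xor_div_two]; omega
  rw [← Nat.xor_xor_cancel_left (a / 2) (b / 2), hxor, Nat.xor_zero]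

theorem testBit_log2_xor_ne {a b : ℕ} (h : a ^^^ b ≠ 0) :
    a.testBit (a ^^^ b).log2 ≠ b.testBit (a ^^^ b).log2 := by
  have := Nat.testBit_log2 h
  rw [Nat.testBit_xor] at this
  intro heq
  simp [heq] at this

end Nat

/-- The vertex `x` lies in block `x / m`; `Nat.log2 (a ^^^ b)` is the highest bit in which `a` and
`b` differ, and `0` when `a = b`. -/
def bondyErdosColoring (m k : ℕ) [NeZero k] : Sym2 (Fin (m * 2 ^ k)) → Fin k :=
  Sym2.lift ⟨fun u v => Fin.ofNat k ((u / m : ℕ) ^^^ (v / m : ℕ)).log2,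
    fun u v => by simp only [Nat.xor_comm]⟩

section BondyErdos

variable {m k : ℕ} [NeZero k]

theorem val_bondyErdosColoring (u v : Fin (m * 2 ^ k)) :
    (bondyErdosColoring m k s(u, v) : ℕ) = ((u / m : ℕ) ^^^ (v / m : ℕ)).log2 := by
  have hblock : ∀ x : Fin (m * 2 ^ k), (x : ℕ) / m < 2 ^ k := fun x =>
    Nat.div_lt_of_lt_mul x.isLt
  simp [bondyErdosColoring, Nat.mod_eq_of_lt (Nat.log2_xor_lt (NeZero.ne k) (hblock u) (hblock v))]

theorem div_eq_of_colorGraph_bondyErdosColoring_zero_adj {u v : Fin (m * 2 ^ k)}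
    (h : (colorGraph (bondyErdosColoring m k) 0).Adj u v) : (u : ℕ) / (2 * m) = v / (2 * m) := by
  have hlog := val_bondyErdosColoring u v
  rw [h.2, Fin.val_zero] at hlog
  simpa [Nat.div_div_eq_div_mul, mul_comm m] using Nat.div_two_eq_of_log2_xor_eq_zero hlog.symm

/-- Colour `i ≠ 0` is bipartite: its edges join blocks whose indices differ in bit `i`. -/
def bondyErdosColoring.bicoloring {i : Fin k} (hi : i ≠ 0) :
    (colorGraph (bondyErdosColoring m k) i).Coloring Bool :=
  Coloring.mk (fun x => (x / m : ℕ).testBit i) fun {u v} h => by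
    have hlog := val_bondyErdosColoring u v
    rw [h.2] at hlog
    have hxor : (u / m : ℕ) ^^^ (v / m : ℕ) ≠ 0 := fun h0 => by
      rw [h0, Nat.log2_zero] at hlog
      exact hi (Fin.ext (by simp [hlog]))
    simpa [← hlog] using Nat.testBit_log2_xor_ne hxor

theorem not_hasMonoCopy_bondyErdosColoring (hm : 1 ≤ m) :
    ¬ HasMonoCopy (cycleGraph (2 * m + 1)) (bondyErdosColoring m k) := by
  intro hmono
  obtain ⟨i, hcopy⟩ := hmono.exists_containsCopy_colorGraph
  by_cases hi : i = 0
  · subst hi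
    have := hcopy.card_le_of_preconnected cycleGraph_preconnected (fun x => (x : ℕ) / (2 * m))
      (fun _ _ => div_eq_of_colorGraph_bondyErdosColoring_zero_adj)
      (fun x => ⟨x % (2 * m), Nat.mod_lt _ (by omega)⟩)
      (fun x y hq hr => Fin.ext <| by
        rw [← Nat.div_add_mod x (2 * m), ← Nat.div_add_mod y (2 * m), hq, Fin.mk.inj hr])
    simp at this
  · exact not_colorable_two_cycleGraph_of_odd (by omega) (odd_two_mul_add_one m)
      (hcopy.colorable (bondyErdosColoring.bicoloring hi).colorable)

end BondyErdos

theorem stmt3 (m k : ℕ) (hm : 1 ≤ m) (hk : 1 ≤ k) :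
    m * 2 ^ k + 1 ≤ multiRamsey (cycleGraph (2 * m + 1)) k := by
  have : NeZero k := ⟨by omega⟩
  exact le_multiRamsey_of_not_hasMonoCopy (exists_forall_hasMonoCopy _) _
    (not_hasMonoCopy_bondyErdosColoring hm)
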